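/- Let G be a non-abelian finite n-centralizer group of conjugate type (p, 1) for a prime p. Then |G/Z(G)| ≤ (n−2)², with equality if and only if G/Z(G) is isomorphic to C_p × C_p. -/

import Mathlib

/-
Write `Z = Z(G)`, `k = |G : Z|` and, for a non-central `x`, `m = |C(x) : Z|`, so that `k = m p`.
All proper centralizers have the same order, so they are pairwise incomparable; hence for
non-central `x, y` we have `C(y) = C(x)` iff `y ∈ Z(C(x)) \ Z`, and `G \ Z` is the disjoint union
of the sets `Z(C) \ Z` over the `n - 1` proper centralizers `C`. Each `|Z(C) : Z|` is at most `m`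
(as `Z(C) ≤ C`) and at most `p` (as `Z(C) ∩ C(g) = Z` for any `g ∉ C`), so
`k - 1 ≤ (n - 1) (min p m - 1)`, which forces `k ≤ (n - 2)²`, with equality only when `m = p`.
Then `|G/Z| = p²` and `G/Z` is not cyclic, so `G/Z ≅ C_p × C_p`. Conversely, if `|G/Z| = p²`
then every proper centralizer is abelian (being cyclic over `Z`), so `|Z(C) : Z| = p` for all `C`
and the count becomes `p² - 1 = (n - 1)(p - 1)`, i.e. `n - 2 = p`.
-/

/-- The set of element centralizers of a group `G`. -/
def centSet (G : Type*) [Group G] : Set (Subgroup G) :=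
  Set.range fun x : G => Subgroup.centralizer {x}

open Subgroup

theorem mul_le_sub_one_sq_of_mul_sub_one_le {q M N : ℕ} (hq : 2 ≤ q) (hqM : q ≤ M)
    (h : q * M - 1 ≤ N * (q - 1)) :
    q * M ≤ (N - 1) ^ 2 ∧ (q * M = (N - 1) ^ 2 → q = M) := by
  obtain ⟨a, rfl⟩ : ∃ a, q = a + 1 := ⟨q - 1, by omega⟩
  obtain ⟨d, rfl⟩ : ∃ d, M = a + 1 + d := ⟨M - (a + 1), by omega⟩
  obtain ⟨X, rfl⟩ : ∃ X, N = X + 1 := Nat.exists_eq_add_one.mpr <| Nat.pos_of_ne_zero <| by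
    rintro rfl
    simp only [zero_mul, nonpos_iff_eq_zero, Nat.sub_eq_zero_iff_le] at h
    nlinarith
  have hX : (a + 1) * (a + d) ≤ X * a := by
    have e1 : (a + 1) * (a + 1 + d) = (a + 1) * (a + d) + a + 1 := by ring
    have e2 : (X + 1) * (a + 1 - 1) = X * a + a := by rw [Nat.add_sub_cancel]; ring
    omega
  -- square `q (M - 1) ≤ X (q - 1)` and use `M (q - 1)² ≤ q (M - 1)²`, strict unless `q = M`
  have hsq : ((a + 1) * (a + d)) ^ 2 ≤ (X * a) ^ 2 := Nat.pow_le_pow_left hX 2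
  have key : (a + 1 + d) * a ^ 2 + d * (a ^ 2 + a * d + 2 * a + d) = (a + 1) * (a + d) ^ 2 := by
    ring
  have ha : 0 < a ^ 2 := pow_pos (by omega) 2
  simp only [Nat.add_sub_cancel]
  constructor
  · by_contra! hlt
    nlinarith [Nat.mul_lt_mul_of_pos_right hlt ha]
  · intro heq
    by_contra hd
    have : 0 < d * (a ^ 2 + a * d + 2 * a + d) := Nat.mul_pos (by omega) (by omega)
    nlinarith

theorem nonempty_addEquiv_zmod_prod_of_card_eq_sq {V : Type*} [AddCommGroup V] [Finite V] {p : ℕ}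
    [hp : Fact p.Prime] (hV : Nat.card V = p ^ 2) (hexp : AddMonoid.exponent V = p) :
    Nonempty (V ≃+ ZMod p × ZMod p) := by
  have : Module (ZMod p) V := AddCommGroup.zmodModule (hexp ▸ AddMonoid.exponent_nsmul_eq_zero)
  have : Module.Finite (ZMod p) V := Module.Finite.of_finite
  have hrank : Module.finrank (ZMod p) V = Module.finrank (ZMod p) (ZMod p × ZMod p) := by
    rw [Module.finrank_prod, Module.finrank_self]
    refine Nat.pow_right_injective hp.out.two_le (?_ : p ^ _ = p ^ 2)
    rw [← hV, Module.natCard_eq_pow_finrank (K := ZMod p), Nat.card_zmod]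
  exact (FiniteDimensional.nonempty_linearEquiv_of_finrank_eq hrank).map LinearEquiv.toAddEquiv

theorem nonempty_mulEquiv_zmod_prod_of_card_eq_prime_sq {Q : Type*} [Group Q] {p : ℕ}
    [hp : Fact p.Prime] (hQ : Nat.card Q = p ^ 2) (hQc : ¬IsCyclic Q) :
    Nonempty (Q ≃* Multiplicative (ZMod p) × Multiplicative (ZMod p)) := by
  have : Finite Q := Nat.finite_of_card_ne_zero (hQ ▸ pow_ne_zero 2 hp.out.ne_zero)
  let _ : CommGroup Q := IsPGroup.commGroupOfCardEqPrimeSq hQ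
  obtain ⟨e⟩ := nonempty_addEquiv_zmod_prod_of_card_eq_sq (V := Additive Q) hQ
    ((not_isCyclic_iff_exponent_eq_prime hp.out hQ).mp hQc)
  exact ⟨(AddEquiv.toMultiplicative e).trans (MulEquiv.prodMultiplicative _ _)⟩

/-- `G` is of conjugate type `(m, 1)`. -/
def IsConjugateType (G : Type*) [Group G] (m : ℕ) : Prop :=
  ∀ x : G, x ∉ center G → (centralizer {x}).index = m

section

variable {G : Type*} [Group G]

theorem centralizer_singleton_eq_top_iff {x : G} : centralizer {x} = ⊤ ↔ x ∈ center G := by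
  rw [centralizer_eq_top_iff_subset, Set.singleton_subset_iff, SetLike.mem_coe]

theorem mem_centralizer_iff_le_centralizer_singleton {H : Subgroup G} {y : G} :
    y ∈ centralizer (H : Set G) ↔ H ≤ centralizer {y} := by
  rw [mem_centralizer_iff]
  exact ⟨fun h g hg => mem_centralizer_singleton_iff.mpr (h g hg),
    fun h g hg => mem_centralizer_singleton_iff.mp (h hg)⟩

theorem card_eq_card_mul_relIndex {H K : Subgroup G} (h : H ≤ K) :
    Nat.card K = Nat.card H * H.relIndex K := by
  rw [← relIndex_bot_left, ← relIndex_bot_left, relIndex_mul_relIndex _ _ _ bot_le h]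

theorem le_centralizer_of_relIndex_center_prime {H : Subgroup G}
    (hH : ((center G).relIndex H).Prime) : H ≤ centralizer H := by
  have : Fact ((center G).relIndex H).Prime := ⟨hH⟩
  have : IsCyclic (H ⧸ (center G).subgroupOf H) :=
    isCyclic_of_prime_card (p := (center G).relIndex H) rfl
  refine le_centralizer_iff_isMulCommutative.mpr
    ((QuotientGroup.mk' ((center G).subgroupOf H)).isMulCommutative_of_isCyclic_of_ker_le_center ?_)
  rw [QuotientGroup.ker_mk']
  exact fun a ha => mem_center_iff.mpr fun g => Subtype.ext (mem_center_iff.mp ha g)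

theorem IsConjugateType.relIndex_center_centralizer_mul {p : ℕ} (h : IsConjugateType G p) {x : G}
    (hx : x ∉ center G) : (center G).relIndex (centralizer {x}) * p = (center G).index :=
  h x hx ▸ relIndex_mul_index (center_le_centralizer _)

variable [Finite G]

attribute [local instance] isFiniteRelIndex_of_finiteIndex

theorem one_lt_relIndex_center_centralizer {x : G} (hx : x ∉ center G) :
    1 < (center G).relIndex (centralizer {x}) := by
  refine Nat.one_lt_iff_ne_zero_and_ne_one.mpr ⟨relIndex_ne_zero, fun h => hx ?_⟩
  exact relIndex_eq_one.mp h (mem_centralizer_singleton_iff.mpr rfl)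

theorem relIndex_center_centralizer_centralizer_le_relIndex (x : G) :
    (center G).relIndex (centralizer (centralizer {x} : Set G)) ≤
      (center G).relIndex (centralizer {x}) :=
  relIndex_le_of_le_right
    (fun _ hy => mem_centralizer_singleton_iff.mpr
      (mem_centralizer_iff.mp hy x (mem_centralizer_singleton_iff.mpr rfl)).symm) relIndex_ne_zero

variable (G) in
noncomputable def noncentralCentralizers : Finset (Subgroup G) :=
  (Set.Finite.sdiff (s := centSet G) (t := {⊤}) (Set.finite_range _)).toFinset

theorem mem_noncentralCentralizers {C : Subgroup G} :
    C ∈ noncentralCentralizers G ↔ ∃ x ∉ center G, centralizer {x} = C := by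
  simp only [noncentralCentralizers, centSet, Set.Finite.mem_toFinset, Set.mem_sdiff, Set.mem_range,
    Set.mem_singleton_iff]
  constructor
  · rintro ⟨⟨x, rfl⟩, hx⟩
    exact ⟨x, mt centralizer_singleton_eq_top_iff.mpr hx, rfl⟩
  · rintro ⟨x, hx, rfl⟩
    exact ⟨⟨x, rfl⟩, mt centralizer_singleton_eq_top_iff.mp hx⟩

theorem ncard_centSet : (centSet G).ncard = (noncentralCentralizers G).card + 1 := by
  have htop : ⊤ ∈ centSet G := ⟨1, centralizer_singleton_eq_top_iff.mpr (one_mem _)⟩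
  rw [noncentralCentralizers, ← Set.ncard_eq_toFinset_card,
    Set.ncard_sdiff_singleton_add_one htop (Set.finite_range _)]

namespace IsConjugateType

variable {p : ℕ} (h : IsConjugateType G p)
include h

theorem centralizer_eq_of_le {x y : G} (hx : x ∉ center G) (hy : y ∉ center G)
    (hle : centralizer {x} ≤ centralizer {y}) : centralizer {x} = centralizer {y} := by
  have hrel := relIndex_mul_index hle
  rw [h x hx, h y hy] at hrel
  have hp : p ≠ 0 := h x hx ▸ index_ne_zero_of_finite
  exact le_antisymm hle (relIndex_eq_one.mp ((mul_eq_right₀ hp).mp hrel))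

theorem centralizer_eq_iff {x y : G} (hx : x ∉ center G) :
    centralizer {y} = centralizer {x} ↔
      y ∈ centralizer (centralizer {x} : Set G) ∧ y ∉ center G := by
  constructor
  · intro hyx
    refine ⟨mem_centralizer_iff_le_centralizer_singleton.mpr hyx.ge, fun hy => hx ?_⟩
    rw [← centralizer_singleton_eq_top_iff, ← hyx, centralizer_singleton_eq_top_iff.mpr hy]
  · rintro ⟨hyA, hy⟩
    exact (h.centralizer_eq_of_le hx hy (mem_centralizer_iff_le_centralizer_singleton.mp hyA)).symm

theorem card_sub_card_center_eq_sum :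
    Nat.card G - Nat.card (center G) = ∑ C ∈ noncentralCentralizers G,
      (Nat.card (centralizer (C : Set G)) - Nat.card (center G)) := by
  classical
  have := Fintype.ofFinite G
  set s : Finset G := (center G : Set G)ᶜ.toFinset
  have hs : s.card = Nat.card G - Nat.card (center G) := by
    rw [← Set.ncard_coe_finset, Set.coe_toFinset, Set.compl_eq_univ_sdiff,
      Set.ncard_sdiff (Set.subset_univ _), Set.ncard_univ, ← Nat.card_coe_set_eq]
    rfl
  rw [← hs, Finset.card_eq_sum_card_fiberwise (f := fun y => centralizer {y})
    fun y hy => mem_noncentralCentralizers.mpr ⟨y, by simpa [s] using hy, rfl⟩]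
  refine Finset.sum_congr rfl fun C hC => ?_
  obtain ⟨x, hx, rfl⟩ := mem_noncentralCentralizers.mp hC
  have hfiber : (({y ∈ s | centralizer {y} = centralizer {x}} : Finset G) : Set G) =
      (centralizer (centralizer {x} : Set G) : Set G) \ center G := by
    ext y
    simp [s, h.centralizer_eq_iff hx, and_comm]
  rw [← Set.ncard_coe_finset, hfiber, Set.ncard_sdiff (center_le_centralizer _),
    ← Nat.card_coe_set_eq, ← Nat.card_coe_set_eq]
  rfl

theorem index_center_sub_one_eq_sum :
    (center G).index - 1 = ∑ C ∈ noncentralCentralizers G,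
      ((center G).relIndex (centralizer (C : Set G)) - 1) := by
  refine Nat.eq_of_mul_eq_mul_left (Nat.card_pos (α := center G)) ?_
  rw [Finset.mul_sum, Nat.mul_sub_one, card_mul_index, h.card_sub_card_center_eq_sum]
  refine Finset.sum_congr rfl fun C _ => ?_
  rw [Nat.mul_sub_one, ← card_eq_card_mul_relIndex (center_le_centralizer _)]

theorem relIndex_center_centralizer_centralizer_le {x : G} (hx : x ∉ center G) :
    (center G).relIndex (centralizer (centralizer {x} : Set G)) ≤ p := by
  obtain ⟨g, hg⟩ : ∃ g, g ∉ centralizer {x} := by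
    by_contra! hall
    exact hx (centralizer_singleton_eq_top_iff.mp (eq_top_iff.mpr fun g _ => hall g))
  have hgZ : g ∉ center G := fun hg' => hg (center_le_centralizer _ hg')
  have hinf : centralizer {g} ⊓ centralizer (centralizer {x} : Set G) = center G := by
    refine le_antisymm (fun a ⟨hag, haA⟩ => ?_)
      (le_inf (center_le_centralizer _) (center_le_centralizer _))
    by_contra haZ
    have hax := (h.centralizer_eq_iff hx).mpr ⟨haA, haZ⟩
    exact hg (hax ▸ mem_centralizer_singleton_iff.mpr (mem_centralizer_singleton_iff.mp hag).symm)
  calc (center G).relIndex (centralizer (centralizer {x} : Set G))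
      = (centralizer {g}).relIndex (centralizer (centralizer {x} : Set G)) := by
        rw [← hinf, inf_relIndex_right]
    _ ≤ (centralizer {g}).index := by
        simpa only [relIndex_top_right] using relIndex_le_of_le_right le_top relIndex_ne_zero
    _ = p := h g hgZ

theorem index_center_sub_one_le {x : G} (hx : x ∉ center G) :
    (center G).index - 1 ≤
      (noncentralCentralizers G).card * (min p ((center G).relIndex (centralizer {x})) - 1) := by
  rw [h.index_center_sub_one_eq_sum, ← smul_eq_mul]
  refine Finset.sum_le_card_nsmul _ _ _ fun C hC => Nat.sub_le_sub_right ?_ 1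
  obtain ⟨y, hy, rfl⟩ := mem_noncentralCentralizers.mp hC
  have hp : 0 < p := Nat.pos_of_ne_zero (h x hx ▸ index_ne_zero_of_finite)
  have hyx : (center G).relIndex (centralizer {y}) = (center G).relIndex (centralizer {x}) :=
    Nat.eq_of_mul_eq_mul_right hp
      (by rw [h.relIndex_center_centralizer_mul hx, h.relIndex_center_centralizer_mul hy])
  exact le_min (h.relIndex_center_centralizer_centralizer_le hy)
    (hyx ▸ relIndex_center_centralizer_centralizer_le_relIndex y)

theorem index_center_sub_one_eq_of_index_eq_sq (hp : p.Prime) (hk : (center G).index = p ^ 2) :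
    (center G).index - 1 = (noncentralCentralizers G).card * (p - 1) := by
  rw [h.index_center_sub_one_eq_sum]
  refine Finset.sum_const_nat fun C hC => ?_
  obtain ⟨y, hy, rfl⟩ := mem_noncentralCentralizers.mp hC
  have hm : (center G).relIndex (centralizer {y}) = p := Nat.eq_of_mul_eq_mul_right hp.pos
    (by rw [h.relIndex_center_centralizer_mul hy, hk, sq])
  have hcomm := le_centralizer_of_relIndex_center_prime (hm ▸ hp)
  rw [le_antisymm (h.relIndex_center_centralizer_centralizer_le hy)
    (hm ▸ relIndex_le_of_le_right hcomm relIndex_ne_zero)]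

end IsConjugateType

end

/-- For a non-abelian finite `n`-centralizer group of conjugate type `(p, 1)` (`p` prime),
`|G/Z(G)| ≤ (n-2)²`, with equality iff `G/Z(G) ≅ C_p × C_p`. -/
theorem stmt10 (G : Type*) [Group G] [Finite G]
    (hG : ¬∀ a b : G, a * b = b * a) (n p : ℕ) (hp : p.Prime)
    (htype : ∀ x : G, x ∉ Subgroup.center G → (Subgroup.centralizer {x}).index = p)
    (hcard : (centSet G).ncard = n) :
    Nat.card (G ⧸ Subgroup.center G) ≤ (n - 2) ^ 2 ∧
      (Nat.card (G ⧸ Subgroup.center G) = (n - 2) ^ 2 ↔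
        Nonempty ((G ⧸ Subgroup.center G) ≃*
          (Multiplicative (ZMod p) × Multiplicative (ZMod p)))) := by
  have : Fact p.Prime := ⟨hp⟩
  have h : IsConjugateType G p := htype
  obtain ⟨x, hx⟩ : ∃ x, x ∉ center G := by
    by_contra! hZ
    exact hG fun a b => mem_center_iff.mp (hZ b) a
  set m := (center G).relIndex (centralizer {x})
  set N := (noncentralCentralizers G).card
  have hn : n - 2 = N - 1 := by rw [← hcard, ncard_centSet]; omega
  have hk : (center G).index = min p m * max p m := by
    rw [min_mul_max, mul_comm, h.relIndex_center_centralizer_mul hx]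
  obtain ⟨hle, heq⟩ := mul_le_sub_one_sq_of_mul_sub_one_le
    (le_min hp.two_le (one_lt_relIndex_center_centralizer hx)) min_le_max
    (hk ▸ h.index_center_sub_one_le hx)
  change (center G).index ≤ _ ∧ ((center G).index = _ ↔ _)
  rw [hn, hk]
  refine ⟨hle, fun hsq => ?_, fun ⟨e⟩ => ?_⟩
  · have hmp : m = p := by have := heq hsq; omega
    refine nonempty_mulEquiv_zmod_prod_of_card_eq_prime_sq ?_ fun _ => hG
      (isMulCommutative_of_isCyclic_quotient_center_self G).is_comm.comm
    rw [← index_eq_card, hk, hmp, min_self, max_self, sq]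
  · have hp2 : (center G).index = p ^ 2 := by
      rw [index_eq_card, Nat.card_congr e.toEquiv, Nat.card_prod, Nat.card_eq_fintype_card,
        Fintype.card_multiplicative, ZMod.card, sq]
    have hcount := h.index_center_sub_one_eq_of_index_eq_sq hp hp2
    have hN : N = p + 1 := by
      refine Nat.eq_of_mul_eq_mul_right (Nat.sub_pos_of_lt hp.one_lt) ?_
      rw [← hcount, hp2, ← Nat.sq_sub_sq, one_pow]
    rw [← hk, hp2, hN, Nat.add_sub_cancel]
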